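/- arXiv:2005.04923 — 7 statements merged into one kernel-verified Lean document; each statement's English description precedes it below -/
import Mathlib

section
/- In ℓ²(ℕ), the convex hull B of {0} ∪ {k·e_k : k ∈ ℕ}, where e_k is the k-th unit vector, is a convex, semi-solid, norm-unbounded subset of the positive cone satisfying ⋂_{α>0} αB = {0}. Hence a convex, semi-solid subset of the positive cone with trivial intersection ⋂_{α>0} αB = {0} need not be topologically bounded. -/
/-!
`B` sits inside the box `{x | ∀ k, 0 ≤ x k ≤ k}`, which gives positivity, and `x ∈ α • B` for
all `α > 0` forces `0 ≤ x k ≤ α k` for all `α`, hence `x = 0`. Yet `B` contains `k • e_k`, of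
norm `k`. For semi-solidity, `y` with `0 ≤ y ≤ x` is `c · x` for a multiplier `c` with values in
`[0, 1]`; coordinatewise multiplication by `c` is linear and sends `k • e_k` to a point of the
segment `[0, k • e_k]`, so it maps the convex hull `B` into itself.
-/

open Pointwise
open scoped ENNReal

namespace lp

variable {ι : Type*} {p : ℝ≥0∞}

theorem convex_setOf_forall_apply_mem {E : ι → Type*} [∀ i, NormedAddCommGroup (E i)]
    [∀ i, NormedSpace ℝ (E i)] {s : ∀ i, Set (E i)} (hs : ∀ i, Convex ℝ (s i)) :
    Convex ℝ {x : lp E p | ∀ i, x i ∈ s i} :=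
  fun _ hx _ hy _ _ ha hb hab i => hs i (hx i) (hy i) ha hb hab

noncomputable def mulCoord (c : ι → ℝ) (hc : ∀ i, |c i| ≤ 1) :
    lp (fun _ : ι => ℝ) p →ₗ[ℝ] lp (fun _ : ι => ℝ) p where
  toFun x := ⟨fun i => c i * x i, x.2.mono' fun i => by
    simpa [abs_mul] using mul_le_of_le_one_left (abs_nonneg _) (hc i)⟩
  map_add' x y := lp.ext <| funext fun i => mul_add (c i) (x i) (y i)
  map_smul' a x := lp.ext <| funext fun i => mul_left_comm (c i) a (x i)

theorem mulCoord_apply (c : ι → ℝ) (hc : ∀ i, |c i| ≤ 1) (x : lp (fun _ : ι => ℝ) p) (i : ι) :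
    mulCoord c hc x i = c i * x i :=
  rfl

end lp

section ScaledBasisHull

variable {p : ℝ≥0∞}

noncomputable def scaledBasis (p : ℝ≥0∞) (k : ℕ) : lp (fun _ : ℕ => ℝ) p :=
  (k : ℝ) • lp.single p k 1

theorem scaledBasis_apply (k j : ℕ) : scaledBasis p k j = if j = k then (k : ℝ) else 0 := by
  by_cases h : j = k <;> simp [scaledBasis, lp.single_apply, h]

theorem norm_scaledBasis [Fact (1 ≤ p)] (k : ℕ) : ‖scaledBasis p k‖ = k := by
  have hp : 0 < p := lt_of_lt_of_le one_pos (Fact.out : 1 ≤ p)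
  simp [scaledBasis, norm_smul, lp.norm_single hp]

noncomputable def scaledBasisHull (p : ℝ≥0∞) : Set (lp (fun _ : ℕ => ℝ) p) :=
  convexHull ℝ ({0} ∪ Set.range (scaledBasis p))

theorem zero_mem_scaledBasisHull : (0 : lp (fun _ : ℕ => ℝ) p) ∈ scaledBasisHull p :=
  subset_convexHull ℝ _ (Or.inl rfl)

theorem scaledBasis_mem_scaledBasisHull (k : ℕ) : scaledBasis p k ∈ scaledBasisHull p :=
  subset_convexHull ℝ _ (Or.inr ⟨k, rfl⟩)

theorem scaledBasisHull_subset_box :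
    scaledBasisHull p ⊆ {x | ∀ k : ℕ, x k ∈ Set.Icc 0 (k : ℝ)} := by
  refine convexHull_min ?_ (lp.convex_setOf_forall_apply_mem fun k => convex_Icc _ _)
  rintro _ (rfl | ⟨k, rfl⟩) j
  · simp
  · rw [scaledBasis_apply]
    split_ifs with h
    · simp [h]
    · simp

theorem mulCoord_image_scaledBasisHull_subset (c : ℕ → ℝ) (hc₀ : ∀ k, 0 ≤ c k)
    (hc : ∀ k, |c k| ≤ 1) : lp.mulCoord c hc '' scaledBasisHull p ⊆ scaledBasisHull p := by
  rw [scaledBasisHull, LinearMap.image_convexHull]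
  refine convexHull_min ?_ (convex_convexHull ℝ _)
  rintro _ ⟨_, rfl | ⟨k, rfl⟩, rfl⟩
  · rw [map_zero]
    exact zero_mem_scaledBasisHull
  · have hck : lp.mulCoord c hc (scaledBasis p k) = c k • scaledBasis p k := by
      ext j
      simp only [lp.mulCoord_apply, lp.coeFn_smul, Pi.smul_apply, smul_eq_mul, scaledBasis_apply]
      split_ifs with h
      · rw [h]
      · simp
    rw [hck]
    exact (convex_convexHull ℝ _).smul_mem_of_zero_mem zero_mem_scaledBasisHull
      (scaledBasis_mem_scaledBasisHull k) ⟨hc₀ k, (le_abs_self _).trans (hc k)⟩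

theorem mem_scaledBasisHull_of_le {x y : lp (fun _ : ℕ => ℝ) p} (hx : x ∈ scaledBasisHull p)
    (hy₀ : ∀ k, 0 ≤ y k) (hyx : ∀ k, y k ≤ x k) : y ∈ scaledBasisHull p := by
  have hx₀ (k : ℕ) : 0 ≤ x k := (hy₀ k).trans (hyx k)
  have hc₀ (k : ℕ) : 0 ≤ y k / x k := div_nonneg (hy₀ k) (hx₀ k)
  have hc (k : ℕ) : |y k / x k| ≤ 1 := by
    rw [abs_of_nonneg (hc₀ k)]
    exact div_le_one_of_le₀ (hyx k) (hx₀ k)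
  refine mulCoord_image_scaledBasisHull_subset _ hc₀ hc ⟨x, hx, lp.ext <| funext fun k => ?_⟩
  rw [lp.mulCoord_apply]
  rcases eq_or_ne (x k) 0 with h | h
  · simp [h, le_antisymm (h ▸ hyx k) (hy₀ k)]
  · exact div_mul_cancel₀ _ h

theorem eq_zero_of_forall_mem_smul_scaledBasisHull {x : lp (fun _ : ℕ => ℝ) p}
    (hx : ∀ α : ℝ, 0 < α → x ∈ α • scaledBasisHull p) : x = 0 := by
  have hbox : ∀ α : ℝ, 0 < α → ∀ k, 0 ≤ x k ∧ x k ≤ α * k := by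
    intro α hα k
    obtain ⟨b, hb, rfl⟩ := hx α hα
    obtain ⟨hb₀, hbk⟩ := scaledBasisHull_subset_box hb k
    simp only [lp.coeFn_smul, Pi.smul_apply, smul_eq_mul]
    exact ⟨mul_nonneg hα.le hb₀, mul_le_mul_of_nonneg_left hbk hα.le⟩
  refine lp.ext <| funext fun k => le_antisymm ?_ (hbox 1 one_pos k).1
  refine le_of_forall_pos_le_add fun ε hε => ?_
  have hk : (0 : ℝ) < k + 1 := by positivity
  calc x k ≤ ε / (k + 1) * k := (hbox _ (div_pos hε hk) k).2
    _ ≤ ε / (k + 1) * (k + 1) := by gcongr; linarith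
    _ = 0 + ε := by field_simp; ring

theorem not_isVonNBounded_scaledBasisHull [Fact (1 ≤ p)] :
    ¬ Bornology.IsVonNBounded ℝ (scaledBasisHull p) := by
  rw [NormedSpace.isVonNBounded_iff, isBounded_iff_forall_norm_le]
  rintro ⟨C, hC⟩
  obtain ⟨k, hk⟩ := exists_nat_gt C
  have := hC _ (scaledBasis_mem_scaledBasisHull k)
  rw [norm_scaledBasis] at this
  linarith

theorem iInter_smul_scaledBasisHull :
    (⋂ α ∈ Set.Ioi (0 : ℝ), α • scaledBasisHull p) = {0} := by
  ext x
  simp only [Set.mem_iInter, Set.mem_Ioi, Set.mem_singleton_iff]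
  refine ⟨eq_zero_of_forall_mem_smul_scaledBasisHull, ?_⟩
  rintro rfl α _
  exact ⟨0, zero_mem_scaledBasisHull, smul_zero α⟩

end ScaledBasisHull

/-- In `ℓ²(ℕ)`, the convex hull `B` of `{0} ∪ {k • e_k : k ∈ ℕ}` is a convex, semi-solid,
norm-unbounded subset of the positive cone with `⋂_{α > 0} α • B = {0}`.  Hence a convex,
semi-solid subset of the positive cone with trivial intersection need not be topologically
bounded. -/
theorem ell2_counterexample :
    ∀ B : Set (lp (fun _ : ℕ => ℝ) 2),
      B = convexHull ℝ ({0} ∪ Set.range fun k : ℕ => (k : ℝ) • lp.single 2 k (1 : ℝ)) →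
      Convex ℝ B ∧
      (∀ x ∈ B, ∀ k : ℕ, 0 ≤ (x : ℕ → ℝ) k) ∧
      (∀ x ∈ B, ∀ y : lp (fun _ : ℕ => ℝ) 2,
        (∀ k : ℕ, 0 ≤ (y : ℕ → ℝ) k) → (∀ k : ℕ, (y : ℕ → ℝ) k ≤ (x : ℕ → ℝ) k) → y ∈ B) ∧
      ¬ Bornology.IsVonNBounded ℝ B ∧
      (⋂ α ∈ Set.Ioi (0 : ℝ), α • B) = {0} := by
  rintro B rfl
  exact ⟨convex_convexHull ℝ _, fun x hx k => (scaledBasisHull_subset_box hx k).1,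
    fun x hx y hy₀ hyx => mem_scaledBasisHull_of_le hx hy₀ hyx,
    not_isVonNBounded_scaledBasisHull, iInter_smul_scaledBasisHull⟩
end

section
/- Let (V, ≤) be a locally convex topological vector lattice whose topology is generated by a family of seminorms (ρ_i)_{i∈I} such that (a) for x, y ∈ V₊, x ≤ y iff ρ_i(x) ≤ ρ_i(y) for all i, and (b) for every function f : I → ℝ₊ there exists x ∈ V₊ with ρ_i(x) = f(i) for all i. Then V admits nontrivial minimal elements for unbounded, convex and semi-solid subsets of V₊. -/
open Filter Topology

/-!
An unbounded `B` has a seminorm `ρ i₀` unbounded on it, so there are `xₙ ∈ B` with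
`ρ i₀ xₙ ≥ n + 1`. By (b) there is `x ≥ 0` with `ρ i₀ x = 1` and `ρ i x = 0` for `i ≠ i₀`;
by (a) this `x` lies below every positive `y` with `ρ i₀ y ≥ 1`, in particular below
`xₙ / (n + 1)`, which lies in `B` by convexity since `0 ∈ B`.
-/

theorem WithSeminorms.exists_not_bddAbove_of_not_isVonNBounded {𝕜 E ι : Type*}
    [NontriviallyNormedField 𝕜] [AddCommGroup E] [Module 𝕜 E] [TopologicalSpace E]
    {p : SeminormFamily 𝕜 E ι} (hp : WithSeminorms p) {s : Set E}
    (hs : ¬ Bornology.IsVonNBounded 𝕜 s) : ∃ i, ∀ r : ℝ, ∃ x ∈ s, r < p i x := by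
  obtain ⟨i, hi⟩ := not_forall.mp (mt hp.isVonNBounded_iff_seminorm_bddAbove.mpr hs)
  exact ⟨i, fun r => by simpa using not_bddAbove_iff.mp hi r⟩

theorem le_of_seminorm_le_of_forall_ne_eq_zero {ι V : Type*} [AddCommGroup V] [Module ℝ V] [LE V]
    {ρ : ι → Seminorm ℝ V}
    (hmono : ∀ x y : V, 0 ≤ x → 0 ≤ y → (∀ i, ρ i x ≤ ρ i y) → x ≤ y)
    {x y : V} {i₀ : ι} (hx : 0 ≤ x) (hy : 0 ≤ y) (hx_supp : ∀ i ≠ i₀, ρ i x = 0)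
    (hi₀ : ρ i₀ x ≤ ρ i₀ y) : x ≤ y := by
  refine hmono x y hx hy fun i => ?_
  by_cases hi : i = i₀
  · exact hi ▸ hi₀
  · exact (hx_supp i hi).trans_le (apply_nonneg _ _)

theorem locallyConvex_admits_minimal_elements_general {V : Type*} [AddCommGroup V] [Lattice V]
    [Module ℝ V] [TopologicalSpace V]
    {I : Type*} (ρ : I → Seminorm ℝ V) (hsem : WithSeminorms ρ)
    (ha : ∀ x y : V, 0 ≤ x → 0 ≤ y → (x ≤ y ↔ ∀ i, ρ i x ≤ ρ i y))
    (hb : ∀ f : I → ℝ, (∀ i, 0 ≤ f i) → ∃ x : V, 0 ≤ x ∧ ∀ i, ρ i x = f i) :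
    ∀ B : Set V, (∀ x ∈ B, 0 ≤ x) → Convex ℝ B →
      (∀ x ∈ B, ∀ y : V, 0 ≤ y → y ≤ x → y ∈ B) →
      ¬ Bornology.IsVonNBounded ℝ B →
      ∃ x ∈ B, x ≠ 0 ∧ ∃ xs : ℕ → V, (∀ n, xs n ∈ B) ∧
        ∃ a : ℕ → ℝ, Antitone a ∧ (∀ n, 0 ≤ a n) ∧ Tendsto a atTop (𝓝 (0 : ℝ)) ∧
          ∀ n, x ≤ a n • xs n := by
  classical
  intro B hBpos hBconv hBsolid hBunb
  obtain ⟨i₀, hi₀⟩ := hsem.exists_not_bddAbove_of_not_isVonNBounded hBunb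
  choose xs hxsB hxsρ using fun n : ℕ => hi₀ (n + 1)
  obtain ⟨x, hx0, hxρ⟩ := hb (fun i => if i = i₀ then 1 else 0) fun i => by
    split_ifs <;> norm_num
  let a : ℕ → ℝ := fun n => 1 / (n + 1)
  have h0B : (0 : V) ∈ B := hBsolid _ (hxsB 0) 0 le_rfl (hBpos _ (hxsB 0))
  have haB (n : ℕ) : a n • xs n ∈ B :=
    hBconv.smul_mem_of_zero_mem h0B (hxsB n)
      ⟨by positivity, (div_le_one₀ (by positivity)).mpr (by simp)⟩
  have hle (n : ℕ) : x ≤ a n • xs n := by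
    refine le_of_seminorm_le_of_forall_ne_eq_zero (i₀ := i₀)
      (fun x y hx hy => (ha x y hx hy).2) hx0 (hBpos _ (haB n)) (fun i hi => by simp [hxρ, hi]) ?_
    rw [map_smul_eq_mul, Real.norm_of_nonneg (by positivity), hxρ, if_pos rfl,
      one_div_mul_eq_div, one_le_div (by positivity)]
    exact (hxsρ n).le
  refine ⟨x, hBsolid _ (haB 0) x hx0 (hle 0), ?_, xs, hxsB, a, ?_, fun n => by positivity,
    tendsto_one_div_add_atTop_nhds_zero_nat, hle⟩
  · rintro rfl
    simpa using hxρ i₀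
  · exact fun m n hmn => by dsimp only [a]; gcongr

/-- A locally convex topological vector lattice whose topology is generated by a family of
seminorms `(ρ_i)` such that (a) for `x, y ∈ V₊`, `x ≤ y` iff `ρ_i(x) ≤ ρ_i(y)` for all `i`,
and (b) every function `f : I → ℝ₊` is realized as `(ρ_i(x))_i` for some `x ∈ V₊`,
admits nontrivial minimal elements for unbounded, convex and semi-solid subsets of `V₊`. -/
theorem locallyConvex_admits_minimal_elements {V : Type*} [AddCommGroup V] [Lattice V]
    [CovariantClass V V (· + ·) (· ≤ ·)] [Module ℝ V] [PosSMulMono ℝ V]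
    [TopologicalSpace V] [IsTopologicalAddGroup V] [ContinuousSMul ℝ V] [T2Space V]
    {I : Type*} [Nonempty I] (ρ : I → Seminorm ℝ V) (hsem : WithSeminorms ρ)
    (ha : ∀ x y : V, 0 ≤ x → 0 ≤ y → (x ≤ y ↔ ∀ i, ρ i x ≤ ρ i y))
    (hb : ∀ f : I → ℝ, (∀ i, 0 ≤ f i) → ∃ x : V, 0 ≤ x ∧ ∀ i, ρ i x = f i) :
    ∀ B : Set V, (∀ x ∈ B, 0 ≤ x) → Convex ℝ B →
      (∀ x ∈ B, ∀ y : V, 0 ≤ y → y ≤ x → y ∈ B) →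
      ¬ Bornology.IsVonNBounded ℝ B →
      ∃ x ∈ B, x ≠ 0 ∧ ∃ xs : ℕ → V, (∀ n, xs n ∈ B) ∧
        ∃ a : ℕ → ℝ, Antitone a ∧ (∀ n, 0 ≤ a n) ∧ Tendsto a atTop (𝓝 (0 : ℝ)) ∧
          ∀ n, x ≤ a n • xs n :=
  locallyConvex_admits_minimal_elements_general ρ hsem ha hb
end

section
/- Let U be a Hausdorff locally convex ordered topological vector space and C ⊆ U a closed convex cone with -U₊ ⊆ C and C ∩ U₊ = {0}. Then for each x ∈ U₊ \ {0} there exists a continuous linear functional x' on U which is positive (x'(U₊) ⊆ ℝ₊), satisfies x'(y) ≤ 0 for all y ∈ C, and x'(x) > 0. -/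
/-!
`x ∉ C`, since `C ∩ U₊ = {0}`, so Farkas' lemma for the proper cone `C` gives a continuous
functional `f` with `f ≥ 0` on `C` and `f x < 0`. Then `x' = -f` works: it is `≤ 0` on `C`,
and positive on `U₊` because `-U₊ ⊆ C`.
-/

lemma Convex.add_mem_of_smul_mem {𝕜 E : Type*} [Field 𝕜] [LinearOrder 𝕜] [IsStrictOrderedRing 𝕜]
    [AddCommGroup E] [Module 𝕜 E] {C : Set E} (hconv : Convex 𝕜 C)
    (hsmul : ∀ t : 𝕜, 0 ≤ t → ∀ y ∈ C, t • y ∈ C) {y z : E} (hy : y ∈ C) (hz : z ∈ C) :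
    y + z ∈ C := by
  have hmid : (2⁻¹ : 𝕜) • y + (2⁻¹ : 𝕜) • z ∈ C :=
    hconv hy hz (by positivity) (by positivity) (by norm_num)
  convert hsmul 2 zero_le_two _ hmid using 1
  module

namespace ProperCone

variable {𝕜 E : Type*} [Field 𝕜] [LinearOrder 𝕜] [IsStrictOrderedRing 𝕜]
  [AddCommGroup E] [Module 𝕜 E] [TopologicalSpace E]

def ofConvex (C : Set E) (hclosed : IsClosed C) (hconv : Convex 𝕜 C)
    (hsmul : ∀ t : 𝕜, 0 ≤ t → ∀ y ∈ C, t • y ∈ C) (hzero : (0 : E) ∈ C) : ProperCone 𝕜 E where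
  carrier := C
  add_mem' := hconv.add_mem_of_smul_mem hsmul
  zero_mem' := hzero
  smul_mem' c _ hy := hsmul c c.2 _ hy
  isClosed' := hclosed

end ProperCone

theorem separating_functional_exists_general {U : Type*} [AddCommGroup U] [PartialOrder U]
    [Module ℝ U]
    [TopologicalSpace U] [IsTopologicalAddGroup U] [ContinuousSMul ℝ U]
    [LocallyConvexSpace ℝ U]
    (C : Set U) (hCclosed : IsClosed C) (hCconv : Convex ℝ C)
    (hCcone : ∀ t : ℝ, 0 ≤ t → ∀ y ∈ C, t • y ∈ C)
    (hneg : ∀ z : U, 0 ≤ z → -z ∈ C)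
    (hCpos : ∀ y ∈ C, 0 ≤ y → y = 0)
    (x : U) (hx : 0 ≤ x) (hx0 : x ≠ 0) :
    ∃ x' : U →L[ℝ] ℝ, (∀ z : U, 0 ≤ z → 0 ≤ x' z) ∧ (∀ y ∈ C, x' y ≤ 0) ∧ 0 < x' x := by
  have hxC : x ∉ C := fun hxC => hx0 (hCpos x hxC hx)
  let K := ProperCone.ofConvex C hCclosed hCconv hCcone (by simpa using hneg 0 le_rfl)
  obtain ⟨f, hfC, hfx⟩ := K.hyperplane_separation_point (x₀ := x) hxC
  refine ⟨-f, fun z hz => ?_, fun y hy => neg_nonpos.2 (hfC y hy), neg_pos.2 hfx⟩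
  simpa using hfC (-z) (hneg z hz)

/-- In a Hausdorff locally convex ordered topological vector space, if `C` is a closed
convex cone with `-U₊ ⊆ C` and `C ∩ U₊ = {0}`, then for each `x ∈ U₊ \ {0}` there is a
positive continuous linear functional `x'` with `x' ≤ 0` on `C` and `x'(x) > 0`. -/
theorem separating_functional_exists {U : Type*} [AddCommGroup U] [PartialOrder U]
    [CovariantClass U U (· + ·) (· ≤ ·)] [Module ℝ U]
    [TopologicalSpace U] [IsTopologicalAddGroup U] [ContinuousSMul ℝ U]
    [LocallyConvexSpace ℝ U] [T2Space U]
    (hclosedCone : IsClosed {x : U | 0 ≤ x})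
    (C : Set U) (hCclosed : IsClosed C) (hCconv : Convex ℝ C)
    (hCcone : ∀ t : ℝ, 0 ≤ t → ∀ y ∈ C, t • y ∈ C)
    (hneg : ∀ z : U, 0 ≤ z → -z ∈ C)
    (hCpos : ∀ y ∈ C, 0 ≤ y → y = 0)
    (x : U) (hx : 0 ≤ x) (hx0 : x ≠ 0) :
    ∃ x' : U →L[ℝ] ℝ, (∀ z : U, 0 ≤ z → 0 ≤ x' z) ∧ (∀ y ∈ C, x' y ≤ 0) ∧ 0 < x' x :=
  separating_functional_exists_general C hCclosed hCconv hCcone hneg hCpos x hx hx0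
end

section
/- Let U be a Hausdorff locally convex ordered topological vector space, K₀ ⊆ U a convex cone, and C a convex cone containing -U₊ with C ⊆ U. Then the following are equivalent: (i) the closure of C intersects U₊ only in {0}; (ii) for each x ∈ U₊ \ {0} there exists a positive continuous linear functional x' with x'(y) ≤ 0 for all y ∈ C and x'(x) > 0. -/
/-! Given `x ∈ U₊ \ {0}` outside `cl C`, Hahn–Banach separates `x` strictly from the closed
convex set `cl C`. A linear functional bounded above on a cone is nonpositive on it, so the
separating functional is `≤ 0` on `C`, hence `≥ 0` on `U₊ ⊆ -C`. Conversely such functionals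
are `≤ 0` on `cl C` and positive at every `x ∈ U₊ \ {0}`, which keeps `x` out of `cl C`. -/

open Set

theorem LinearMap.nonpos_of_bddAbove_image_cone {E : Type*} [AddCommGroup E] [Module ℝ E]
    (f : E →ₗ[ℝ] ℝ) {C : Set E} (hC : ∀ t : ℝ, 0 ≤ t → ∀ y ∈ C, t • y ∈ C)
    (hbdd : BddAbove (f '' C)) {y : E} (hy : y ∈ C) : f y ≤ 0 := by
  obtain ⟨u, hu⟩ := hbdd
  by_contra! hpos
  set t := (|u| + 1) / f y
  have hle : f (t • y) ≤ u := hu ⟨t • y, hC t (by positivity) y hy, rfl⟩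
  have hscaled : f (t • y) = |u| + 1 := by
    rw [map_smul, smul_eq_mul, div_mul_cancel₀ _ hpos.ne']
  linarith [le_abs_self u]

theorem exists_nonpos_on_cone_pos_of_notMem_closure {E : Type*} [TopologicalSpace E]
    [AddCommGroup E] [Module ℝ E] [IsTopologicalAddGroup E] [ContinuousSMul ℝ E]
    [LocallyConvexSpace ℝ E] {C : Set E} (hconv : Convex ℝ C)
    (hcone : ∀ t : ℝ, 0 ≤ t → ∀ y ∈ C, t • y ∈ C) (h0 : (0 : E) ∈ C) {x : E}
    (hx : x ∉ closure C) : ∃ f : StrongDual ℝ E, (∀ y ∈ C, f y ≤ 0) ∧ 0 < f x := by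
  obtain ⟨f, u, hfu, hux⟩ := geometric_hahn_banach_closed_point hconv.closure isClosed_closure hx
  have hbdd : BddAbove (f '' C) :=
    ⟨u, forall_mem_image.2 fun y hy => (hfu y (subset_closure hy)).le⟩
  have hu : 0 < u := map_zero f ▸ hfu 0 (subset_closure h0)
  exact ⟨f, fun y hy => (f : E →ₗ[ℝ] ℝ).nonpos_of_bddAbove_image_cone hcone hbdd hy,
    hu.trans hux⟩

theorem abstract_FTAP_locally_convex_general {U : Type*} [AddCommGroup U] [PartialOrder U]
    [Module ℝ U]
    [TopologicalSpace U] [IsTopologicalAddGroup U] [ContinuousSMul ℝ U]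
    [LocallyConvexSpace ℝ U]
    (C : Set U) (hCconv : Convex ℝ C)
    (hCcone : ∀ t : ℝ, 0 ≤ t → ∀ y ∈ C, t • y ∈ C)
    (hneg : ∀ z : U, 0 ≤ z → -z ∈ C) :
    (closure C ∩ {x : U | 0 ≤ x} = {0}) ↔
      ∀ x : U, 0 ≤ x → x ≠ 0 → ∃ x' : U →L[ℝ] ℝ,
        (∀ z : U, 0 ≤ z → 0 ≤ x' z) ∧ (∀ y ∈ C, x' y ≤ 0) ∧ 0 < x' x := by
  have h0C : (0 : U) ∈ C := by simpa using hneg 0 le_rfl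
  constructor
  · intro hNFL x hx hx0
    have hxC : x ∉ closure C := fun hxC => hx0 (hNFL ▸ ⟨hxC, hx⟩ : x ∈ ({0} : Set U))
    obtain ⟨f, hfC, hfx⟩ := exists_nonpos_on_cone_pos_of_notMem_closure hCconv hCcone h0C hxC
    exact ⟨f, fun z hz => by simpa using hfC (-z) (hneg z hz), hfC, hfx⟩
  · intro hsep
    refine eq_singleton_iff_unique_mem.2 ⟨⟨subset_closure h0C, le_rfl⟩, ?_⟩
    rintro x ⟨hxC, hx⟩
    by_contra hx0
    obtain ⟨f, -, hfC, hfx⟩ := hsep x hx hx0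
    have hf_closure : closure C ⊆ {y | f y ≤ 0} :=
      closure_minimal hfC (isClosed_le f.continuous continuous_const)
    exact (hf_closure hxC).not_gt hfx

/-- Abstract fundamental theorem of asset pricing on locally convex spaces: for a convex
cone `C` containing `-U₊`, the "no free lunch" condition `cl(C) ∩ U₊ = {0}` holds if and
only if for each `x ∈ U₊ \ {0}` there exists a positive continuous linear functional `x'`
with `x' ≤ 0` on `C` and `x'(x) > 0`. -/
theorem abstract_FTAP_locally_convex {U : Type*} [AddCommGroup U] [PartialOrder U]
    [CovariantClass U U (· + ·) (· ≤ ·)] [Module ℝ U]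
    [TopologicalSpace U] [IsTopologicalAddGroup U] [ContinuousSMul ℝ U]
    [LocallyConvexSpace ℝ U] [T2Space U]
    (hclosedCone : IsClosed {x : U | 0 ≤ x})
    (C : Set U) (hCconv : Convex ℝ C)
    (hCcone : ∀ t : ℝ, 0 ≤ t → ∀ y ∈ C, t • y ∈ C)
    (hneg : ∀ z : U, 0 ≤ z → -z ∈ C) :
    (closure C ∩ {x : U | 0 ≤ x} = {0}) ↔
      ∀ x : U, 0 ≤ x → x ≠ 0 → ∃ x' : U →L[ℝ] ℝ,
        (∀ z : U, 0 ≤ z → 0 ≤ x' z) ∧ (∀ y ∈ C, x' y ≤ 0) ∧ 0 < x' x :=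
  abstract_FTAP_locally_convex_general C hCconv hCcone hneg
end

section
/- In the Banach space C(Ω) of continuous real functions on a compact metric space Ω, for every family X' of nonzero positive continuous linear functionals that is strictly positive separating for C(Ω)₊ \ {0} (i.e., for each f ≥ 0, f ≠ 0 there is x' ∈ X' with x'(f) > 0), there exists a countable subfamily Y' ⊆ X' that is still strictly positive separating for C(Ω)₊ \ {0}. -/
/-!
A nonzero `f ≥ 0` in `C(Ω)` is bounded below by a positive constant on some ball, hence
dominates a positive multiple of a tent function whose centre lies in a fixed countable dense
set and whose radius is rational. A positive functional that is strictly positive on such a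
tent is strictly positive on every `f` dominating a multiple of it, so it suffices to pick,
for each of these countably many tents, one functional of `X'` that is strictly positive on it.
-/

open Metric

section OrderedModule

variable {E : Type*} [AddCommGroup E] [PartialOrder E] [IsOrderedAddMonoid E] [Module ℝ E]
  {F : Type*} [FunLike F E ℝ] [LinearMapClass F ℝ E ℝ]

theorem pos_of_smul_le_of_pos {φ : F} (hφ : ∀ f : E, 0 ≤ f → 0 ≤ φ f) {c : ℝ} (hc : 0 < c)
    {g f : E} (hgf : c • g ≤ f) (hg : 0 < φ g) : 0 < φ f := by
  have h : 0 ≤ φ (f - c • g) := hφ _ (sub_nonneg.mpr hgf)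
  rw [map_sub, map_smul, smul_eq_mul, sub_nonneg] at h
  exact (mul_pos hc hg).trans_le h

theorem exists_countable_subset_separating_of_dominating (G : Set E) (hG : G.Countable)
    (hG_pos : ∀ g ∈ G, 0 ≤ g ∧ g ≠ 0)
    (hG_dom : ∀ f : E, 0 ≤ f → f ≠ 0 → ∃ g ∈ G, ∃ c : ℝ, 0 < c ∧ c • g ≤ f)
    (X' : Set F) (hpos : ∀ φ ∈ X', ∀ f : E, 0 ≤ f → 0 ≤ φ f)
    (hsep : ∀ f : E, 0 ≤ f → f ≠ 0 → ∃ φ ∈ X', 0 < φ f) :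
    ∃ Y' ⊆ X', Y'.Countable ∧ ∀ f : E, 0 ≤ f → f ≠ 0 → ∃ φ ∈ Y', 0 < φ f := by
  have hchoice (g : G) : ∃ φ ∈ X', 0 < φ g := hsep g (hG_pos g g.2).1 (hG_pos g g.2).2
  choose φ hφX hφg using hchoice
  have : Countable G := hG.to_subtype
  refine ⟨Set.range φ, Set.range_subset_iff.mpr hφX, Set.countable_range φ, ?_⟩
  intro f hf hf0
  obtain ⟨g, hg, c, hc, hcgf⟩ := hG_dom f hf hf0
  exact ⟨φ ⟨g, hg⟩, ⟨_, rfl⟩, pos_of_smul_le_of_pos (hpos _ (hφX _)) hc hcgf (hφg _)⟩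

end OrderedModule

section Tent

variable {Ω : Type*} [PseudoMetricSpace Ω]

noncomputable def tent (p : Ω) (r : ℝ) : C(Ω, ℝ) :=
  ⟨fun x => max (r - dist x p) 0, by fun_prop⟩

theorem tent_apply (p : Ω) (r : ℝ) (x : Ω) : tent p r x = max (r - dist x p) 0 := rfl

theorem tent_nonneg (p : Ω) (r : ℝ) : 0 ≤ tent p r := fun _ => le_max_right _ _

theorem tent_ne_zero (p : Ω) {r : ℝ} (hr : 0 < r) : tent p r ≠ 0 := by
  intro h
  have := DFunLike.congr_fun h p
  rw [tent_apply, dist_self, sub_zero, max_eq_left hr.le] at this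
  exact hr.ne' this

theorem smul_tent_le {f : C(Ω, ℝ)} (hf : 0 ≤ f) {p : Ω} {r a : ℝ} (hr : 0 < r)
    (ha : ∀ x ∈ ball p r, a ≤ f x) : (a / r) • tent p r ≤ f := by
  refine ContinuousMap.le_def.mpr fun x => ?_
  rw [ContinuousMap.smul_apply, smul_eq_mul, tent_apply]
  by_cases hx : dist x p < r
  · have hax := ha x hx
    have hfx : 0 ≤ f x := hf x
    rw [max_eq_left (sub_nonneg.mpr hx.le), div_mul_eq_mul_div, div_le_iff₀ hr]
    rcases le_total 0 a with h | h <;> nlinarith [dist_nonneg (x := x) (y := p)]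
  · rw [max_eq_right (by linarith), mul_zero]
    exact hf x

theorem exists_smul_tent_le {D : Set Ω} (hD : Dense D) {f : C(Ω, ℝ)} (hf : 0 ≤ f)
    (hf0 : f ≠ 0) : ∃ p ∈ D, ∃ q : ℚ, 0 < q ∧ ∃ c : ℝ, 0 < c ∧ c • tent p q ≤ f := by
  obtain ⟨ω, hω⟩ : ∃ ω, 0 < f ω := by
    by_contra! h
    exact hf0 (ContinuousMap.ext fun x => le_antisymm (h x) (hf x))
  obtain ⟨δ, hδ, hball⟩ : ∃ δ > 0, ball ω δ ⊆ {x | f ω / 2 < f x} :=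
    Metric.mem_nhds_iff.mp <| (isOpen_lt continuous_const f.continuous).mem_nhds
      (half_lt_self hω)
  obtain ⟨q, hq, hqδ⟩ := exists_rat_btwn (half_pos hδ)
  obtain ⟨p, hpD, hωp⟩ := hD.exists_dist_lt ω hq
  have hsub : ball p q ⊆ ball ω δ := ball_subset_ball' (by rw [dist_comm]; linarith)
  exact ⟨p, hpD, q, Rat.cast_pos.mp hq, f ω / 2 / q, by positivity,
    smul_tent_le hf hq fun x hx => (hball (hsub hx)).le⟩

theorem exists_countable_dominating_set [TopologicalSpace.SeparableSpace Ω] :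
    ∃ G : Set C(Ω, ℝ), G.Countable ∧ (∀ g ∈ G, 0 ≤ g ∧ g ≠ 0) ∧
      ∀ f : C(Ω, ℝ), 0 ≤ f → f ≠ 0 → ∃ g ∈ G, ∃ c : ℝ, 0 < c ∧ c • g ≤ f := by
  obtain ⟨D, hDc, hD⟩ := TopologicalSpace.exists_countable_dense Ω
  refine ⟨(fun s : Ω × ℚ => tent s.1 s.2) '' D ×ˢ {q | 0 < q},
    (hDc.prod (Set.to_countable _)).image _, ?_, ?_⟩
  · rintro _ ⟨⟨p, q⟩, ⟨-, hq⟩, rfl⟩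
    exact ⟨tent_nonneg p q, tent_ne_zero p (Rat.cast_pos.mpr hq)⟩
  · intro f hf hf0
    obtain ⟨p, hpD, q, hq, c, hc, hle⟩ := exists_smul_tent_le hD hf hf0
    exact ⟨_, ⟨(p, q), ⟨hpD, hq⟩, rfl⟩, c, hc, hle⟩

end Tent

theorem halmos_savage_continuous_functions_general {Ω : Type*} [MetricSpace Ω] [CompactSpace Ω]
    (X' : Set (C(Ω, ℝ) →L[ℝ] ℝ))
    (hpos : ∀ x' ∈ X', ∀ f : C(Ω, ℝ), 0 ≤ f → 0 ≤ x' f)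
    (hsep : ∀ f : C(Ω, ℝ), 0 ≤ f → f ≠ 0 → ∃ x' ∈ X', 0 < x' f) :
    ∃ Y' ⊆ X', Y'.Countable ∧
      ∀ f : C(Ω, ℝ), 0 ≤ f → f ≠ 0 → ∃ x' ∈ Y', 0 < x' f := by
  obtain ⟨G, hG, hG_pos, hG_dom⟩ := exists_countable_dominating_set (Ω := Ω)
  exact exists_countable_subset_separating_of_dominating G hG hG_pos hG_dom X' hpos hsep

/-- Halmos–Savage property of `C(Ω)` for a compact metric space `Ω`: every family of
nonzero positive continuous linear functionals which is strictly positive separating for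
`C(Ω)₊ \ {0}` has a countable subfamily which is still strictly positive separating. -/
theorem halmos_savage_continuous_functions {Ω : Type*} [MetricSpace Ω] [CompactSpace Ω]
    (X' : Set (C(Ω, ℝ) →L[ℝ] ℝ))
    (hpos : ∀ x' ∈ X', ∀ f : C(Ω, ℝ), 0 ≤ f → 0 ≤ x' f)
    (hne : ∀ x' ∈ X', x' ≠ 0)
    (hsep : ∀ f : C(Ω, ℝ), 0 ≤ f → f ≠ 0 → ∃ x' ∈ X', 0 < x' f) :
    ∃ Y' ⊆ X', Y'.Countable ∧
      ∀ f : C(Ω, ℝ), 0 ≤ f → f ≠ 0 → ∃ x' ∈ Y', 0 < x' f :=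
  halmos_savage_continuous_functions_general X' hpos hsep
end

section
/- Let (Ω, G, P) be a probability space and B ⊆ L⁰₊(Ω, G, P) an unbounded-in-probability, convex, semi-solid subset. Then there exist an element X ∈ B with P(X > 0) > 0, a sequence (X_n) ⊆ B, and reals α_n ↓ 0 such that X ≤ α_n X_n almost surely for each n. In particular, L⁰ admits nontrivial minimal elements for unbounded, convex and semi-solid subsets of its positive cone. -/
open MeasureTheory Filter Topology
open scoped ENNReal

/-- `L⁰` admits nontrivial minimal elements for unbounded, convex and semi-solid subsets of
its positive cone: if `B` is a convex, semi-solid family of nonnegative random variables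
which is not bounded in probability, then there exist `X ∈ B` with `P(X > 0) > 0`, a
sequence `(X_n) ⊆ B` and reals `α_n ↓ 0` with `X ≤ α_n X_n` a.s. for each `n`. -/
theorem L0_admits_minimal_elements {Ω : Type*} [MeasurableSpace Ω]
    (μ : Measure Ω) [IsProbabilityMeasure μ]
    (B : Set (Ω → ℝ))
    (hmeas : ∀ X ∈ B, Measurable X)
    (hpos : ∀ X ∈ B, ∀ᵐ ω ∂μ, 0 ≤ X ω)
    (hconv : Convex ℝ B)
    (hss : ∀ X ∈ B, ∀ Y : Ω → ℝ, Measurable Y → (∀ᵐ ω ∂μ, 0 ≤ Y ω) →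
      (∀ᵐ ω ∂μ, Y ω ≤ X ω) → Y ∈ B)
    (hunb : ¬ ∀ ε : ℝ, 0 < ε → ∃ c : ℝ, 0 < c ∧ ∀ X ∈ B,
      μ {ω | c ≤ |X ω|} < ENNReal.ofReal ε) :
    ∃ X ∈ B, 0 < μ {ω | 0 < X ω} ∧
      ∃ Xs : ℕ → Ω → ℝ, (∀ n, Xs n ∈ B) ∧
        ∃ a : ℕ → ℝ, Antitone a ∧ (∀ n, 0 < a n) ∧ Tendsto a atTop (𝓝 (0 : ℝ)) ∧
          ∀ n, ∀ᵐ ω ∂μ, X ω ≤ a n * Xs n ω := by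
  classical
  push_neg at hunb
  obtain ⟨ε, hε, hB⟩ := hunb
  have hε' : ENNReal.ofReal ε ≠ 0 := by
    simp [ENNReal.ofReal_eq_zero, not_le, hε]
  -- choose witnesses of unboundedness
  have hZex : ∀ n : ℕ, ∃ X ∈ B,
      ENNReal.ofReal ε ≤ μ {ω | ((n : ℝ) + 1) * 2 ^ (n + 1) ≤ |X ω|} := by
    intro n
    exact hB _ (by positivity)
  choose Z hZB hZμ using hZex
  have hZmeas : ∀ n, Measurable (Z n) := fun n => hmeas _ (hZB n)
  have hZ0 : ∀ᵐ ω ∂μ, ∀ n, 0 ≤ Z n ω := ae_all_iff.mpr fun n => hpos _ (hZB n)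
  -- the zero function belongs to B
  have h0B : (0 : Ω → ℝ) ∈ B := by
    refine hss _ (hZB 0) 0 measurable_const (ae_of_all _ fun ω => le_refl 0) ?_
    filter_upwards [hpos _ (hZB 0)] with ω h using h
  -- the convex combinations
  set V : ℕ → Ω → ℝ := fun N ω => ∑ n ∈ Finset.range (N + 1), (2⁻¹ : ℝ) ^ (n + 1) * Z n ω
    with hVdef
  have haux : ∀ N : ℕ, ∀ W ∈ B,
      (fun ω => (∑ n ∈ Finset.range (N + 1), (2⁻¹ : ℝ) ^ (n + 1) * Z n ω)
        + (2⁻¹ : ℝ) ^ (N + 1) * W ω) ∈ B := by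
    intro N
    induction N with
    | zero =>
      intro W hW
      have h := hconv (hZB 0) hW (by norm_num : (0:ℝ) ≤ 2⁻¹) (by norm_num : (0:ℝ) ≤ 2⁻¹)
        (by norm_num)
      convert h using 1
      funext ω
      simp [Finset.sum_range_one, Pi.add_apply, Pi.smul_apply, smul_eq_mul]
    | succ N ih =>
      intro W hW
      have hW' : (2⁻¹ : ℝ) • Z (N + 1) + (2⁻¹ : ℝ) • W ∈ B :=
        hconv (hZB (N + 1)) hW (by norm_num) (by norm_num) (by norm_num)
      have h := ih _ hW'
      convert h using 1
      funext ω
      rw [Finset.sum_range_succ]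
      simp only [Pi.add_apply, Pi.smul_apply, smul_eq_mul]
      ring
  have hVB : ∀ N, V N ∈ B := by
    intro N
    have h := haux N 0 h0B
    simpa [hVdef] using h
  have hVmeas : ∀ N, Measurable (V N) := by
    intro N
    exact Finset.measurable_sum _ fun n _ => (hZmeas n).const_mul _
  have hV0 : ∀ᵐ ω ∂μ, ∀ N, 0 ≤ V N ω := by
    filter_upwards [hZ0] with ω hω
    intro N
    exact Finset.sum_nonneg fun n _ => mul_nonneg (by positivity) (hω n)
  -- a.e. lower bound for V on the sets A n
  have hVlb : ∀ᵐ ω ∂μ, ∀ (n N : ℕ), n ≤ N →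
      ((n : ℝ) + 1) * 2 ^ (n + 1) ≤ |Z n ω| → ((n : ℝ) + 1) ≤ V N ω := by
    filter_upwards [hZ0] with ω hω
    intro n N hnN habs
    have h1 : (2⁻¹ : ℝ) ^ (n + 1) * Z n ω ≤ V N ω := by
      exact Finset.single_le_sum (f := fun k => (2⁻¹ : ℝ) ^ (k + 1) * Z k ω)
        (fun k _ => mul_nonneg (by positivity) (hω k))
        (Finset.mem_range.mpr (Nat.lt_succ_of_le hnN))
    have h2 : |Z n ω| = Z n ω := abs_of_nonneg (hω n)
    have h3 : (2⁻¹ : ℝ) ^ (n + 1) * 2 ^ (n + 1) = 1 := by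
      rw [← mul_pow]; norm_num
    have h4 : ((n : ℝ) + 1) * 2 ^ (n + 1) ≤ Z n ω := by rwa [h2] at habs
    have h5 : (2⁻¹ : ℝ) ^ (n + 1) * (((n : ℝ) + 1) * 2 ^ (n + 1))
        ≤ (2⁻¹ : ℝ) ^ (n + 1) * Z n ω :=
      mul_le_mul_of_nonneg_left h4 (by positivity)
    calc ((n : ℝ) + 1) = (2⁻¹ : ℝ) ^ (n + 1) * (((n : ℝ) + 1) * 2 ^ (n + 1)) := by
          rw [mul_comm ((n : ℝ) + 1) _, ← mul_assoc, h3, one_mul]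
      _ ≤ (2⁻¹ : ℝ) ^ (n + 1) * Z n ω := h5
      _ ≤ V N ω := h1
  -- the sets
  set A : ℕ → Set Ω := fun n => {ω | ((n : ℝ) + 1) * 2 ^ (n + 1) ≤ |Z n ω|} with hAdef
  have hAmeas : ∀ n, MeasurableSet (A n) :=
    fun n => measurableSet_le measurable_const (hZmeas n).abs
  have hAμ : ∀ n, ENNReal.ofReal ε ≤ μ (A n) := hZμ
  set S : ℕ → Set Ω := fun m => ⋃ n, A (m + n) with hSdef
  have hSmeas : ∀ m, MeasurableSet (S m) := fun m => MeasurableSet.iUnion fun n => hAmeas _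
  set F : ℕ → ℕ → Set Ω := fun m N => ⋃ n ∈ Finset.range (N + 1), A (m + n) with hFdef
  have hFmeas : ∀ m N, MeasurableSet (F m N) :=
    fun m N => (Finset.range (N + 1)).measurableSet_biUnion fun n _ => hAmeas _
  have hFS : ∀ m N, F m N ⊆ S m := by
    intro m N ω hω
    simp only [hFdef, Set.mem_iUnion, Finset.mem_range] at hω
    obtain ⟨n, _, hn⟩ := hω
    exact Set.mem_iUnion.mpr ⟨n, hn⟩
  have hSμ : ∀ m, ENNReal.ofReal ε ≤ μ (S m) := by
    intro m
    refine le_trans (hAμ m) (measure_mono ?_)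
    intro ω hω
    exact Set.mem_iUnion.mpr ⟨0, by simpa using hω⟩
  -- choose the truncation levels
  have hNm : ∀ m : ℕ, ∃ N, μ (S m \ F m N) ≤ ENNReal.ofReal ε * (2⁻¹) ^ (m + 2) := by
    intro m
    have hmono : Monotone (F m) := by
      intro N N' hNN ω hω
      simp only [hFdef, Set.mem_iUnion, Finset.mem_range] at hω ⊢
      obtain ⟨n, hn, hmem⟩ := hω
      exact ⟨n, by omega, hmem⟩
    have hUeq : (⋃ N, F m N) = S m := by
      apply Set.Subset.antisymm
      · exact Set.iUnion_subset fun N => hFS m N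
      · intro ω hω
        obtain ⟨n, hn⟩ := Set.mem_iUnion.mp hω
        refine Set.mem_iUnion.mpr ⟨n, ?_⟩
        simp only [hFdef, Set.mem_iUnion, Finset.mem_range]
        exact ⟨n, by omega, hn⟩
    have htend : Tendsto (fun N => μ (F m N)) atTop (𝓝 (μ (S m))) := by
      have := tendsto_measure_iUnion_atTop (μ := μ) hmono
      rwa [hUeq] at this
    set δ : ℝ≥0∞ := ENNReal.ofReal ε * (2⁻¹) ^ (m + 2) with hδdef
    have hδ0 : δ ≠ 0 := by
      apply mul_ne_zero hε'
      simp [pow_eq_zero_iff]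
    have hlt : μ (S m) - δ < μ (S m) :=
      ENNReal.sub_lt_self (measure_ne_top μ _)
        (fun h => hε' (le_antisymm (h ▸ hSμ m) bot_le)) hδ0
    have hev := htend.eventually (eventually_gt_nhds hlt)
    obtain ⟨N, hN⟩ := hev.exists
    refine ⟨N, ?_⟩
    rw [measure_diff (hFS m N) (hFmeas m N).nullMeasurableSet (measure_ne_top μ _)]
    exact tsub_le_iff_left.mpr (tsub_le_iff_right.mp hN.le)
  choose Nf hNf using hNm
  -- the limit set
  set C : Set Ω := ⋂ m, S m with hCdef
  have hSanti : Antitone S := by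
    intro m m' hmm ω hω
    obtain ⟨n, hn⟩ := Set.mem_iUnion.mp hω
    refine Set.mem_iUnion.mpr ⟨m' - m + n, ?_⟩
    rwa [show m + (m' - m + n) = m' + n by omega]
  have hCμ : ENNReal.ofReal ε ≤ μ C := by
    have htend : Tendsto (fun m => μ (S m)) atTop (𝓝 (μ C)) :=
      tendsto_measure_iInter_atTop (fun m => (hSmeas m).nullMeasurableSet) hSanti
        ⟨0, measure_ne_top μ _⟩
    exact ge_of_tendsto htend (Eventually.of_forall hSμ)
  set U : Set Ω := ⋃ m, (S m \ F m (Nf m)) with hUdef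
  have hUμ : μ U ≤ ENNReal.ofReal ε * 2⁻¹ := by
    refine le_trans (measure_iUnion_le _) ?_
    refine le_trans (ENNReal.tsum_le_tsum hNf) ?_
    rw [ENNReal.tsum_mul_left]
    have hgeo : ∑' m : ℕ, (2⁻¹ : ℝ≥0∞) ^ (m + 2) = 2⁻¹ := by
      have h1 : ∑' m : ℕ, (2⁻¹ : ℝ≥0∞) ^ (m + 2) = ∑' m : ℕ, (2⁻¹ : ℝ≥0∞) ^ m * (2⁻¹) ^ 2 :=
        tsum_congr fun m => pow_add _ m 2
      rw [h1, ENNReal.tsum_mul_right, ENNReal.tsum_geometric, ENNReal.one_sub_inv_two, inv_inv]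
      rw [sq, ← mul_assoc, ENNReal.mul_inv_cancel two_ne_zero ENNReal.ofNat_ne_top, one_mul]
    rw [hgeo]
  -- the good set
  set As : Set Ω := C \ U with hAsdef
  have hAsmeas : MeasurableSet As :=
    (MeasurableSet.iInter fun m => hSmeas m).diff
      (MeasurableSet.iUnion fun m => (hSmeas m).diff (hFmeas m (Nf m)))
  have hAsμ : 0 < μ As := by
    rcases eq_or_ne (μ As) 0 with h0 | h0
    · exfalso
      have hCU : μ C ≤ μ U := by
        calc μ C ≤ μ (C \ U ∪ U) := measure_mono (Set.subset_diff_union C U)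
          _ ≤ μ (C \ U) + μ U := measure_union_le _ _
          _ = μ U := by rw [← hAsdef, h0, zero_add]
      have hhalf : ENNReal.ofReal ε * 2⁻¹ < ENNReal.ofReal ε := by
        have := ENNReal.half_lt_self hε' ENNReal.ofReal_ne_top
        rwa [ENNReal.div_eq_inv_mul, mul_comm] at this
      exact absurd (le_trans (hCμ.trans hCU) hUμ) (not_le.mpr hhalf)
    · exact pos_iff_ne_zero.mpr h0
  have hAF : ∀ m, As ⊆ F m (Nf m) := by
    intro m ω hω
    obtain ⟨hC, hU⟩ := hω
    have hSm : ω ∈ S m := Set.mem_iInter.mp hC m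
    by_contra hF
    exact hU (Set.mem_iUnion.mpr ⟨m, hSm, hF⟩)
  -- key a.e. estimate
  have hkey : ∀ᵐ ω ∂μ, ∀ m : ℕ,
      (ω ∈ As → ((m : ℝ) + 1) ≤ V (m + Nf m) ω) ∧ 0 ≤ V (m + Nf m) ω := by
    filter_upwards [hVlb, hV0] with ω h1 h2
    intro m
    refine ⟨fun hω => ?_, h2 _⟩
    have hωF := hAF m hω
    simp only [hFdef, Set.mem_iUnion, Finset.mem_range] at hωF
    obtain ⟨n, hn, hmem⟩ := hωF
    have hA : ((m + n : ℕ) : ℝ) + 1 ≤ V (m + Nf m) ω := by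
      refine h1 (m + n) (m + Nf m) (by omega) ?_
      exact hmem
    have : ((m : ℝ)) + 1 ≤ ((m + n : ℕ) : ℝ) + 1 := by
      push_cast
      linarith [Nat.cast_nonneg (α := ℝ) n]
    linarith
  -- the minimal element
  set X : Ω → ℝ := As.indicator (fun _ => (1 : ℝ)) with hXdef
  have hXmeas : Measurable X := measurable_const.indicator hAsmeas
  have hX0 : ∀ ω, 0 ≤ X ω := fun ω => Set.indicator_nonneg (fun _ _ => zero_le_one) ω
  have hXle : ∀ᵐ ω ∂μ, X ω ≤ V (0 + Nf 0) ω := by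
    filter_upwards [hkey] with ω h
    by_cases hω : ω ∈ As
    · rw [hXdef, Set.indicator_of_mem hω]
      have h00 := (h 0).1 hω
      push_cast at h00
      linarith
    · rw [hXdef, Set.indicator_of_notMem hω]
      exact (h 0).2
  have hXB : X ∈ B := hss _ (hVB (0 + Nf 0)) X hXmeas (ae_of_all _ hX0) hXle
  have hXset : {ω | 0 < X ω} = As := by
    ext ω
    simp only [Set.mem_setOf_eq, hXdef, Set.indicator_apply]
    by_cases hω : ω ∈ As <;> simp [hω]
  refine ⟨X, hXB, by rw [hXset]; exact hAsμ,
    fun m => V (m + Nf m), fun m => hVB _,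
    fun m => 1 / ((m : ℝ) + 1), ?_, fun m => by positivity,
    tendsto_one_div_add_atTop_nhds_zero_nat, ?_⟩
  · intro m m' hmm
    have h1 : ((m : ℝ)) + 1 ≤ (m' : ℝ) + 1 := by
      have := Nat.cast_le (α := ℝ).mpr hmm
      linarith
    exact one_div_le_one_div_of_le (by positivity) h1
  · intro m
    filter_upwards [hkey] with ω h
    by_cases hω : ω ∈ As
    · rw [hXdef, Set.indicator_of_mem hω]
      have hV := (h m).1 hω
      have hm1 : (0 : ℝ) < (m : ℝ) + 1 := by positivity
      calc (1 : ℝ) = 1 / ((m : ℝ) + 1) * ((m : ℝ) + 1) := by field_simp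
        _ ≤ 1 / ((m : ℝ) + 1) * V (m + Nf m) ω := by
            exact mul_le_mul_of_nonneg_left hV (by positivity)
    · rw [hXdef, Set.indicator_of_notMem hω]
      exact mul_nonneg (by positivity) ((h m).2)
end

section
/- Let (Ω, G, P) be a probability space and B ⊆ L⁰₊ a convex set. If every sequence in B has a subsequence whose Cesàro means converge in probability to some finite nonnegative random variable, then B is bounded in probability. -/
/-!
If `B` were not bounded in probability, we could pick `Xₙ ∈ B` with `P(Xₙ ≥ (n+1)²) ≥ ε`.
Along any subsequence `φ`, nonnegativity gives `Sₖ ≥ X_{φ k} / (k+1)` for the Cesàro means, and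
`φ k ≥ k`, so `P(Sₖ ≥ k+1) ≥ ε` for every `k`. A sequence converging in probability to a finite
random variable cannot escape to infinity with probability bounded below, a contradiction.
-/

open MeasureTheory Filter Topology

namespace MeasureTheory

variable {Ω : Type*} [MeasurableSpace Ω] {μ : Measure Ω} [IsFiniteMeasure μ]

lemma tendsto_measure_setOf_le_atTop {X : Ω → ℝ} (hX : AEMeasurable X μ) :
    Tendsto (fun c : ℝ => μ {ω | c ≤ X ω}) atTop (𝓝 0) := by
  have hempty : (⋂ c : ℝ, {ω | c ≤ X ω}) = ∅ :=
    Set.iInter_eq_empty_iff.2 fun ω => ⟨X ω + 1, by simp⟩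
  simpa [Function.comp_def, hempty] using tendsto_measure_iInter_atTop
    (s := fun c : ℝ => {ω | c ≤ X ω}) (fun c => hX.nullMeasurableSet_preimage measurableSet_Ici)
    (fun c d hcd ω hω => hcd.trans hω) ⟨0, measure_ne_top μ _⟩

lemma TendstoInMeasure.tendsto_measure_setOf_le {ι : Type*} {l : Filter ι}
    {S : ι → Ω → ℝ} {X : Ω → ℝ} (hS : TendstoInMeasure μ S l X) (hX : AEMeasurable X μ)
    {c : ι → ℝ} (hc : Tendsto c l atTop) :
    Tendsto (fun i => μ {ω | c i ≤ S i ω}) l (𝓝 0) := by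
  have hfar : Tendsto (fun i => μ {ω | 1 ≤ dist (S i ω) (X ω)}) l (𝓝 0) := by
    simpa [edist_dist] using hS 1 one_pos
  have hlarge : Tendsto (fun i => μ {ω | c i - 1 ≤ X ω}) l (𝓝 0) :=
    (tendsto_measure_setOf_le_atTop hX).comp (tendsto_atTop_add_const_right _ (-1) hc)
  have hsum : Tendsto (fun i => μ {ω | 1 ≤ dist (S i ω) (X ω)} + μ {ω | c i - 1 ≤ X ω}) l
      (𝓝 0) := by
    simpa only [add_zero] using hfar.add hlarge
  refine tendsto_of_tendsto_of_tendsto_of_le_of_le tendsto_const_nhds hsum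
    (fun _ => zero_le) fun i => ?_
  calc μ {ω | c i ≤ S i ω}
      ≤ μ ({ω | 1 ≤ dist (S i ω) (X ω)} ∪ {ω | c i - 1 ≤ X ω}) := by
        refine measure_mono fun ω (hω : c i ≤ S i ω) => ?_
        rcases le_or_gt 1 (dist (S i ω) (X ω)) with hd | hd
        · exact Or.inl hd
        · right
          show c i - 1 ≤ X ω
          rw [Real.dist_eq, abs_lt] at hd
          linarith [hd.2]
    _ ≤ _ := measure_union_le _ _

end MeasureTheory

lemma add_one_le_cesaro_of_sq_le {a : ℕ → ℝ} {k : ℕ}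
    (ha : ∀ l ∈ Finset.range (k + 1), 0 ≤ a l) (hk : ((k : ℝ) + 1) ^ 2 ≤ a k) :
    (k : ℝ) + 1 ≤ (∑ l ∈ Finset.range (k + 1), a l) / (k + 1) := by
  rw [le_div_iff₀ (by positivity)]
  calc ((k : ℝ) + 1) * (k + 1) = ((k : ℝ) + 1) ^ 2 := (sq _).symm
    _ ≤ a k := hk
    _ ≤ ∑ l ∈ Finset.range (k + 1), a l :=
      Finset.single_le_sum ha (Finset.self_mem_range_succ k)

theorem banachSaks_implies_boundedInProbability_general {Ω : Type*} [MeasurableSpace Ω]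
    (μ : Measure Ω) [IsProbabilityMeasure μ]
    (B : Set (Ω → ℝ))
    (hmeas : ∀ X ∈ B, Measurable X)
    (hpos : ∀ X ∈ B, ∀ᵐ ω ∂μ, 0 ≤ X ω)
    (hBS : ∀ Xs : ℕ → Ω → ℝ, (∀ n, Xs n ∈ B) →
      ∃ φ : ℕ → ℕ, StrictMono φ ∧ ∃ X : Ω → ℝ, (∀ᵐ ω ∂μ, 0 ≤ X ω) ∧
        TendstoInMeasure μ
          (fun k ω => (∑ l ∈ Finset.range (k + 1), Xs (φ l) ω) / (k + 1 : ℝ))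
          atTop X) :
    ∀ ε : ℝ, 0 < ε → ∃ c : ℝ, 0 < c ∧ ∀ X ∈ B,
      μ {ω | c ≤ X ω} < ENNReal.ofReal ε := by
  intro ε hε
  by_contra! hunbdd
  choose Xs hXsB hXs using fun n : ℕ => hunbdd (((n : ℝ) + 1) ^ 2) (by positivity)
  obtain ⟨φ, hφ, X, -, hT⟩ := hBS Xs hXsB
  have hX : AEMeasurable X μ := hT.aemeasurable fun k =>
    ((Finset.measurable_sum _ fun l _ => hmeas _ (hXsB (φ l))).div_const _).aemeasurable
  have hsmall := hT.tendsto_measure_setOf_le hX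
    (tendsto_atTop_add_const_right _ 1 tendsto_natCast_atTop_atTop)
  have hlarge : ∀ k : ℕ, ENNReal.ofReal ε ≤
      μ {ω | (k : ℝ) + 1 ≤ (∑ l ∈ Finset.range (k + 1), Xs (φ l) ω) / (k + 1 : ℝ)} := by
    intro k
    refine (hXs (φ k)).trans (measure_mono_ae ?_)
    filter_upwards [ae_all_iff.2 fun n => hpos _ (hXsB n)] with ω hnonneg hbig
    have hφk : ((k : ℝ) + 1) ^ 2 ≤ ((φ k : ℝ) + 1) ^ 2 := by
      gcongr
      exact_mod_cast hφ.le_apply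
    exact add_one_le_cesaro_of_sq_le (fun l _ => hnonneg (φ l)) (hφk.trans hbig)
  exact (ENNReal.ofReal_pos.2 hε).not_ge (ge_of_tendsto' hsmall hlarge)

/-- If a convex set `B` of nonnegative random variables has the Banach–Saks property with
respect to convergence in probability (every sequence in `B` has a subsequence whose
Cesàro means converge in measure to a finite nonnegative random variable), then `B` is
bounded in probability. -/
theorem banachSaks_implies_boundedInProbability {Ω : Type*} [MeasurableSpace Ω]
    (μ : Measure Ω) [IsProbabilityMeasure μ]
    (B : Set (Ω → ℝ))
    (hmeas : ∀ X ∈ B, Measurable X)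
    (hpos : ∀ X ∈ B, ∀ᵐ ω ∂μ, 0 ≤ X ω)
    (hconv : Convex ℝ B)
    (hBS : ∀ Xs : ℕ → Ω → ℝ, (∀ n, Xs n ∈ B) →
      ∃ φ : ℕ → ℕ, StrictMono φ ∧ ∃ X : Ω → ℝ, (∀ᵐ ω ∂μ, 0 ≤ X ω) ∧
        TendstoInMeasure μ
          (fun k ω => (∑ l ∈ Finset.range (k + 1), Xs (φ l) ω) / (k + 1 : ℝ))
          atTop X) :
    ∀ ε : ℝ, 0 < ε → ∃ c : ℝ, 0 < c ∧ ∀ X ∈ B,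
      μ {ω | c ≤ X ω} < ENNReal.ofReal ε :=
  banachSaks_implies_boundedInProbability_general μ B hmeas hpos hBS
end
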